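/- Lemma 2 (averaged Han-type inequality): Let L be a positive integer, let A_1,…,A_L be mutually independent discrete random variables on a finite probability space, and let V be a discrete random variable on the same space, arbitrarily correlated with A_1,…,A_L. For a subset S ⊆ {1,…,L} write A_S for the tuple (A_s : s ∈ S). Then for every l ∈ {1,…,L}: (1/binom(L,l))·∑_{S ⊆ {1,…,L}, |S| = l} I(A_S ; V) ≤ (l/L)·I(A_1,…,A_L ; V). -/

import Mathlib

/-- Probability that the discrete random variable `X` (on finite space `Ω` with
probability mass function `p`) takes the value `x`. -/
noncomputable def pr {Ω : Type*} [Fintype Ω] {α : Type*} [DecidableEq α]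
    (p : Ω → ℝ) (X : Ω → α) (x : α) : ℝ :=
  ∑ ω ∈ Finset.univ.filter (fun ω => X ω = x), p ω

/-- Shannon entropy (base 2) of the discrete random variable `X`. -/
noncomputable def ent {Ω : Type*} [Fintype Ω] {α : Type*} [DecidableEq α]
    (p : Ω → ℝ) (X : Ω → α) : ℝ :=
  -∑ x ∈ Finset.univ.image X, pr p X x * Real.logb 2 (pr p X x)

/-- Mutual information `I(X;Y) = H(X) + H(Y) − H(X,Y)` (base 2). -/
noncomputable def mi {Ω : Type*} [Fintype Ω] {α β : Type*}
    [DecidableEq α] [DecidableEq β]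
    (p : Ω → ℝ) (X : Ω → α) (Y : Ω → β) : ℝ :=
  ent p X + ent p Y - ent p (fun ω => (X ω, Y ω))

/-!
Put `g S = ∑_{i ∈ S} H(A_i) - H(A_S | V)`. Subadditivity of entropy gives `I(A_S; V) ≤ g S`, with
equality for the full tuple by independence. Submodularity of entropy makes `S ↦ H(A_S | V)`
submodular, so `g` is supermodular with `g ∅ = 0`, and Han's inequality for such set functions
says that the average of `g` over the `l`-subsets is at most `(l / L) * g univ`.
-/

open Finset Real

section Entropy

variable {Ω : Type*} [Fintype Ω] {α β γ : Type*} [DecidableEq α] [DecidableEq β] [DecidableEq γ]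
  {p : Ω → ℝ}

lemma pr_nonneg (hp0 : ∀ ω, 0 ≤ p ω) (X : Ω → α) (x : α) : 0 ≤ pr p X x :=
  sum_nonneg fun ω _ => hp0 ω

lemma pr_pos (hp0 : ∀ ω, 0 ≤ p ω) (X : Ω → α) {ω : Ω} (hω : 0 < p ω) : 0 < pr p X (X ω) :=
  hω.trans_le (single_le_sum (fun ω _ => hp0 ω) (by simp))

lemma sum_image_pr_mul (X : Ω → α) (F : α → ℝ) :
    ∑ x ∈ univ.image X, pr p X x * F x = ∑ ω, p ω * F (X ω) := by
  refine sum_image' _ fun ω _ => ?_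
  rw [pr, sum_mul]
  refine sum_congr (by simp) fun ω' hω' => ?_
  rw [(mem_filter.mp hω').2]

lemma sum_image_pr (X : Ω → α) : ∑ x ∈ univ.image X, pr p X x = ∑ ω, p ω := by
  simpa using sum_image_pr_mul (p := p) X fun _ => 1

lemma sum_image_pr_pair_left (X : Ω → α) (Y : Ω → β) (y : β) :
    ∑ x ∈ univ.image X, pr p (fun ω => (X ω, Y ω)) (x, y) = pr p Y y := by
  rw [pr, ← sum_fiberwise_of_maps_to (g := X) fun ω _ => mem_image_of_mem X (mem_univ ω)]
  refine sum_congr rfl fun x _ => ?_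
  rw [pr, filter_filter]
  simp only [Prod.mk.injEq, and_comm]

lemma sum_image_pr_pair_right (X : Ω → α) (Y : Ω → β) (x : α) :
    ∑ y ∈ univ.image Y, pr p (fun ω => (X ω, Y ω)) (x, y) = pr p X x := by
  rw [pr, ← sum_fiberwise_of_maps_to (g := Y) fun ω _ => mem_image_of_mem Y (mem_univ ω)]
  refine sum_congr rfl fun y _ => ?_
  rw [pr, filter_filter]
  simp only [Prod.mk.injEq]

lemma ent_eq_sum (X : Ω → α) : ent p X = -∑ ω, p ω * logb 2 (pr p X (X ω)) := by
  rw [ent, sum_image_pr_mul X fun x => logb 2 (pr p X x)]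

lemma ent_congr {X : Ω → α} {Y : Ω → β} (h : ∀ ω ω', X ω' = X ω ↔ Y ω' = Y ω) :
    ent p X = ent p Y := by
  simp only [ent_eq_sum, pr, h]

lemma ent_const (hp1 : ∑ ω, p ω = 1) (c : α) : ent p (fun _ => c) = 0 := by
  simp [ent_eq_sum, pr, hp1]

lemma sum_mul_pr_ratio_le_one (hp0 : ∀ ω, 0 ≤ p ω) (hp1 : ∑ ω, p ω = 1)
    (X : Ω → α) (Y : Ω → β) (Z : Ω → γ) :
    ∑ ω, p ω * (pr p (fun ω => (X ω, Y ω)) (X ω, Y ω) * pr p (fun ω => (Y ω, Z ω)) (Y ω, Z ω) /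
      (pr p (fun ω => (X ω, Y ω, Z ω)) (X ω, Y ω, Z ω) * pr p Y (Y ω))) ≤ 1 := by
  set W : Ω → α × β × γ := fun ω => (X ω, Y ω, Z ω)
  set G : α × β × γ → ℝ := fun w =>
    pr p (fun ω => (X ω, Y ω)) (w.1, w.2.1) * pr p (fun ω => (Y ω, Z ω)) (w.2.1, w.2.2) /
      pr p Y w.2.1
  have hG : ∀ w, 0 ≤ G w := fun w =>
    div_nonneg (mul_nonneg (pr_nonneg hp0 _ _) (pr_nonneg hp0 _ _)) (pr_nonneg hp0 _ _)
  have hsupp : univ.image W ⊆ univ.image X ×ˢ univ.image Y ×ˢ univ.image Z := by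
    intro w hw
    obtain ⟨ω, -, rfl⟩ := mem_image.mp hw
    simp [W]
  calc _ = ∑ w ∈ univ.image W, pr p W w * (G w / pr p W w) := by
        rw [sum_image_pr_mul]
        simp only [G, W, div_div, mul_comm (pr p Y _)]
    _ ≤ ∑ w ∈ univ.image W, G w := by
        refine sum_le_sum fun w _ => ?_
        rcases (pr_nonneg hp0 W w).eq_or_lt with h | h
        · rw [← h, zero_mul]; exact hG w
        · rw [mul_div_cancel₀ _ h.ne']
    _ ≤ ∑ w ∈ univ.image X ×ˢ univ.image Y ×ˢ univ.image Z, G w :=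
        sum_le_sum_of_subset_of_nonneg hsupp fun w _ _ => hG w
    _ = ∑ y ∈ univ.image Y, pr p Y y := by
        simp only [sum_product]
        rw [sum_comm]
        refine sum_congr rfl fun y _ => ?_
        simp only [G, ← sum_mul_sum, ← sum_div]
        rw [sum_image_pr_pair_left, sum_image_pr_pair_right, mul_self_div_self]
    _ = 1 := by rw [sum_image_pr, hp1]

lemma logb_two_le_sub_one_div {t : ℝ} (ht : 0 < t) : logb 2 t ≤ (t - 1) / log 2 :=
  div_le_div_of_nonneg_right (log_le_sub_one_of_pos ht) (log_pos one_lt_two).le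

theorem ent_triple_add_ent_le (hp0 : ∀ ω, 0 ≤ p ω) (hp1 : ∑ ω, p ω = 1)
    (X : Ω → α) (Y : Ω → β) (Z : Ω → γ) :
    ent p (fun ω => (X ω, Y ω, Z ω)) + ent p Y ≤
      ent p (fun ω => (X ω, Y ω)) + ent p (fun ω => (Y ω, Z ω)) := by
  have hratio := sum_mul_pr_ratio_le_one hp0 hp1 X Y Z
  set qxy : Ω → ℝ := fun ω => pr p (fun ω => (X ω, Y ω)) (X ω, Y ω)
  set qyz : Ω → ℝ := fun ω => pr p (fun ω => (Y ω, Z ω)) (Y ω, Z ω)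
  set qxyz : Ω → ℝ := fun ω => pr p (fun ω => (X ω, Y ω, Z ω)) (X ω, Y ω, Z ω)
  set qy : Ω → ℝ := fun ω => pr p Y (Y ω)
  set r : Ω → ℝ := fun ω => qxy ω * qyz ω / (qxyz ω * qy ω)
  have hterm : ∀ ω, p ω * (logb 2 (qxy ω) + logb 2 (qyz ω) - logb 2 (qxyz ω) - logb 2 (qy ω))
      ≤ (p ω * r ω - p ω) / log 2 := by
    intro ω
    rcases (hp0 ω).eq_or_lt with h0 | h0
    · simp [← h0]
    have hxy : 0 < qxy ω := pr_pos hp0 _ h0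
    have hyz : 0 < qyz ω := pr_pos hp0 _ h0
    have hxyz : 0 < qxyz ω := pr_pos hp0 _ h0
    have hy : 0 < qy ω := pr_pos hp0 _ h0
    have hlog : logb 2 (qxy ω) + logb 2 (qyz ω) - logb 2 (qxyz ω) - logb 2 (qy ω) =
        logb 2 (r ω) := by
      rw [logb_div (by positivity) (by positivity), logb_mul hxy.ne' hyz.ne',
        logb_mul hxyz.ne' hy.ne']
      ring
    calc _ = p ω * logb 2 (r ω) := by rw [hlog]
      _ ≤ p ω * ((r ω - 1) / log 2) :=
          mul_le_mul_of_nonneg_left (logb_two_le_sub_one_div (by positivity)) h0.le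
      _ = _ := by ring
  have hsum : ∑ ω, p ω * (logb 2 (qxy ω) + logb 2 (qyz ω) - logb 2 (qxyz ω) - logb 2 (qy ω))
      ≤ (∑ ω, p ω * r ω - 1) / log 2 := by
    calc _ ≤ ∑ ω, (p ω * r ω - p ω) / log 2 := sum_le_sum fun ω _ => hterm ω
      _ = _ := by rw [← sum_div, sum_sub_distrib, hp1]
  have hneg : (∑ ω, p ω * r ω - 1) / log 2 ≤ 0 :=
    div_nonpos_of_nonpos_of_nonneg (by linarith) (log_pos one_lt_two).le
  simp only [mul_add, mul_sub, sum_add_distrib, sum_sub_distrib] at hsum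
  simp only [ent_eq_sum]
  linarith

theorem ent_pair_add_ent_le_of_determined (hp0 : ∀ ω, 0 ≤ p ω) (hp1 : ∑ ω, p ω = 1)
    {X : Ω → α} {Y : Ω → β} {W : Ω → γ}
    (hX : ∀ ω ω', X ω' = X ω → W ω' = W ω) (hY : ∀ ω ω', Y ω' = Y ω → W ω' = W ω) :
    ent p (fun ω => (X ω, Y ω)) + ent p W ≤ ent p X + ent p Y := by
  have h := ent_triple_add_ent_le hp0 hp1 X W Y
  have hXWY : ent p (fun ω => (X ω, W ω, Y ω)) = ent p (fun ω => (X ω, Y ω)) :=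
    ent_congr fun ω ω' => by simp only [Prod.mk.injEq]; grind
  have hXW : ent p (fun ω => (X ω, W ω)) = ent p X :=
    ent_congr fun ω ω' => by simp only [Prod.mk.injEq]; grind
  have hWY : ent p (fun ω => (W ω, Y ω)) = ent p Y :=
    ent_congr fun ω ω' => by simp only [Prod.mk.injEq]; grind
  rwa [hXWY, hXW, hWY] at h

theorem ent_pair_le (hp0 : ∀ ω, 0 ≤ p ω) (hp1 : ∑ ω, p ω = 1) (X : Ω → α) (Y : Ω → β) :
    ent p (fun ω => (X ω, Y ω)) ≤ ent p X + ent p Y := by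
  simpa [ent_const hp1] using
    ent_pair_add_ent_le_of_determined hp0 hp1 (X := X) (Y := Y) (W := fun _ => ())
      (fun _ _ _ => rfl) (fun _ _ _ => rfl)

theorem ent_pi_eq_sum_of_indep {ι : Type*} [Fintype ι] {α : ι → Type*} [∀ i, DecidableEq (α i)]
    (hp0 : ∀ ω, 0 ≤ p ω) (A : ∀ i, Ω → α i)
    (hindep : ∀ x : ∀ i, α i, pr p (fun ω i => A i ω) x = ∏ i, pr p (A i) (x i)) :
    ent p (fun ω i => A i ω) = ∑ i, ent p (A i) := by
  have hterm : ∀ ω, p ω * logb 2 (pr p (fun ω i => A i ω) (fun i => A i ω)) =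
      ∑ i, p ω * logb 2 (pr p (A i) (A i ω)) := by
    intro ω
    rcases (hp0 ω).eq_or_lt with h0 | h0
    · simp [← h0]
    rw [hindep, logb_prod _ _ fun i _ => (pr_pos hp0 (A i) h0).ne', mul_sum]
  simp only [ent_eq_sum, hterm]
  rw [sum_comm, ← sum_neg_distrib]

end Entropy

section Subtuple

variable {Ω ι β : Type*} [DecidableEq ι] {α : ι → Type*}

def subtuple (A : ∀ i, Ω → α i) (S : Finset ι) (ω : Ω) : ∀ i, Option (α i) :=
  fun i => if i ∈ S then some (A i ω) else none

lemma subtuple_eq_subtuple_iff {A : ∀ i, Ω → α i} {S : Finset ι} {ω ω' : Ω} :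
    subtuple A S ω' = subtuple A S ω ↔ ∀ i ∈ S, A i ω' = A i ω := by
  simp only [subtuple, funext_iff]
  refine forall_congr' fun i => ?_
  by_cases hi : i ∈ S <;> simp [hi]

variable [Fintype Ω] [Fintype ι] [∀ i, DecidableEq (α i)] [DecidableEq β] {p : Ω → ℝ}

lemma ent_subtuple_le_sum (hp0 : ∀ ω, 0 ≤ p ω) (hp1 : ∑ ω, p ω = 1) (A : ∀ i, Ω → α i)
    (S : Finset ι) : ent p (subtuple A S) ≤ ∑ i ∈ S, ent p (A i) := by
  induction S using Finset.induction_on with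
  | empty =>
    rw [ent_congr (X := subtuple A ∅) (Y := fun _ => ()) fun ω ω' => by
      simp [subtuple_eq_subtuple_iff], ent_const hp1, sum_empty]
  | insert i S hi ih =>
    rw [ent_congr (X := subtuple A (insert i S)) (Y := fun ω => (A i ω, subtuple A S ω))
      fun ω ω' => by simp [subtuple_eq_subtuple_iff], sum_insert hi]
    linarith [ent_pair_le hp0 hp1 (A i) (subtuple A S)]

lemma ent_subtuple_empty_pair (A : ∀ i, Ω → α i) (V : Ω → β) :
    ent p (fun ω => (subtuple A ∅ ω, V ω)) = ent p V :=
  ent_congr fun ω ω' => by simp [subtuple_eq_subtuple_iff]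

lemma ent_subtuple_univ_pair (A : ∀ i, Ω → α i) (V : Ω → β) :
    ent p (fun ω => (subtuple A univ ω, V ω)) = ent p (fun ω => ((fun i => A i ω), V ω)) :=
  ent_congr fun ω ω' => by
    rw [Prod.mk.injEq, Prod.mk.injEq, subtuple_eq_subtuple_iff, funext_iff]
    simp

lemma ent_subtuple_pair_union_add_inter_le (hp0 : ∀ ω, 0 ≤ p ω) (hp1 : ∑ ω, p ω = 1)
    (A : ∀ i, Ω → α i) (V : Ω → β) (S T : Finset ι) :
    ent p (fun ω => (subtuple A (S ∪ T) ω, V ω)) + ent p (fun ω => (subtuple A (S ∩ T) ω, V ω)) ≤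
      ent p (fun ω => (subtuple A S ω, V ω)) + ent p (fun ω => (subtuple A T ω, V ω)) := by
  have h := ent_pair_add_ent_le_of_determined hp0 hp1 (X := fun ω => (subtuple A S ω, V ω))
    (Y := fun ω => (subtuple A T ω, V ω)) (W := fun ω => (subtuple A (S ∩ T) ω, V ω))
    (fun ω ω' => by
      simp only [Prod.mk.injEq, subtuple_eq_subtuple_iff, mem_inter]
      exact fun ⟨h, hv⟩ => ⟨fun i hi => h i hi.1, hv⟩)
    (fun ω ω' => by
      simp only [Prod.mk.injEq, subtuple_eq_subtuple_iff, mem_inter]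
      exact fun ⟨h, hv⟩ => ⟨fun i hi => h i hi.2, hv⟩)
  rwa [ent_congr (X := fun ω => ((subtuple A S ω, V ω), (subtuple A T ω, V ω)))
    (Y := fun ω => (subtuple A (S ∪ T) ω, V ω)) fun ω ω' => by
      simp only [Prod.mk.injEq, subtuple_eq_subtuple_iff, forall_mem_union]
      tauto] at h

end Subtuple

section Han

variable {ι : Type*} [DecidableEq ι]

lemma sum_sum_erase_powersetCard_succ {M : Type*} [AddCommMonoid M] (s : Finset ι) (k : ℕ)
    (f : Finset ι → M) :
    ∑ T ∈ powersetCard (k + 1) s, ∑ i ∈ T, f (T.erase i) =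
      (#s - k) • ∑ S ∈ powersetCard k s, f S := by
  have hrhs : (#s - k) • ∑ S ∈ powersetCard k s, f S =
      ∑ S ∈ powersetCard k s, ∑ _j ∈ s \ S, f S := by
    rw [smul_sum]
    refine sum_congr rfl fun S hS => ?_
    obtain ⟨hSs, hcard⟩ := mem_powersetCard.mp hS
    rw [sum_const, card_sdiff_of_subset hSs, hcard]
  rw [hrhs, sum_sigma', sum_sigma']
  refine sum_nbij' (fun x => ⟨x.1.erase x.2, x.2⟩) (fun x => ⟨insert x.2 x.1, x.2⟩) ?_ ?_ ?_ ?_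
    fun _ _ => rfl
  · rintro ⟨T, i⟩ hx
    simp only [mem_sigma, mem_powersetCard] at hx ⊢
    refine ⟨⟨(erase_subset i T).trans hx.1.1, ?_⟩, ?_⟩
    · rw [card_erase_of_mem hx.2, hx.1.2, Nat.add_sub_cancel]
    · simp [hx.1.1 hx.2]
  · rintro ⟨S, j⟩ hx
    simp only [mem_sigma, mem_powersetCard, mem_sdiff] at hx ⊢
    exact ⟨⟨insert_subset hx.2.1 hx.1.1, by rw [card_insert_of_notMem hx.2.2, hx.1.2]⟩,
      mem_insert_self _ _⟩
  · rintro ⟨T, i⟩ hx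
    simp only [mem_sigma] at hx
    simp [insert_erase hx.2]
  · rintro ⟨S, j⟩ hx
    simp only [mem_sigma, mem_sdiff] at hx
    simp [erase_insert hx.2.2]

variable {g : Finset ι → ℝ}

lemma sum_erase_le_card_sub_one_mul_of_supermodular (h0 : g ∅ = 0)
    (hg : ∀ S T, g S + g T ≤ g (S ∪ T) + g (S ∩ T)) (T : Finset ι) :
    ∑ i ∈ T, g (T.erase i) ≤ (#T - 1 : ℝ) * g T := by
  induction T using Finset.induction_on with
  | empty => simp [h0]
  | insert j S hj ih =>
    have hterm : ∀ i ∈ S, g ((insert j S).erase i) ≤ g (S.erase i) + g (insert j S) - g S := by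
      intro i hi
      have := hg ((insert j S).erase i) S
      rw [show (insert j S).erase i ∪ S = insert j S by grind,
        show (insert j S).erase i ∩ S = S.erase i by grind] at this
      linarith
    have hsum := sum_le_sum hterm
    rw [sum_sub_distrib, sum_add_distrib, sum_const, sum_const, nsmul_eq_mul, nsmul_eq_mul] at hsum
    rw [sum_insert hj, erase_insert hj, card_insert_of_notMem hj]
    push_cast
    linarith

lemma card_sub_mul_sum_powersetCard_le_of_supermodular [Fintype ι] (h0 : g ∅ = 0)
    (hg : ∀ S T, g S + g T ≤ g (S ∪ T) + g (S ∩ T)) (k : ℕ) :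
    ((Fintype.card ι - k : ℕ) : ℝ) * ∑ S ∈ powersetCard k univ, g S ≤
      k * ∑ T ∈ powersetCard (k + 1) univ, g T := by
  rw [← nsmul_eq_mul, ← card_univ, ← sum_sum_erase_powersetCard_succ, mul_sum]
  refine sum_le_sum fun T hT => ?_
  have hlocal := sum_erase_le_card_sub_one_mul_of_supermodular h0 hg T
  rwa [(mem_powersetCard.mp hT).2, Nat.cast_succ, add_sub_cancel_right] at hlocal

theorem card_mul_sum_powersetCard_le_of_supermodular [Fintype ι] (h0 : g ∅ = 0)
    (hg : ∀ S T, g S + g T ≤ g (S ∪ T) + g (S ∩ T)) {l : ℕ} (hl : l ≤ Fintype.card ι) :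
    (Fintype.card ι : ℝ) * ∑ S ∈ powersetCard l univ, g S ≤
      l * (Fintype.card ι).choose l * g univ := by
  set n := Fintype.card ι
  induction hl using Nat.decreasingInduction with
  | self =>
    rw [show powersetCard n univ = {univ} from powersetCard_self univ, sum_singleton,
      Nat.choose_self, Nat.cast_one, mul_one]
  | of_succ k hk ih =>
    have hstep := card_sub_mul_sum_powersetCard_le_of_supermodular h0 hg k
    have hchoose : (n.choose (k + 1) : ℝ) * (k + 1) = n.choose k * (n - k : ℕ) := by
      exact_mod_cast Nat.choose_succ_right_eq n k
    have hpos : (0 : ℝ) < (n - k : ℕ) := by exact_mod_cast Nat.sub_pos_of_lt hk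
    push_cast at ih
    refine le_of_mul_le_mul_left ?_ hpos
    calc ((n - k : ℕ) : ℝ) * (n * ∑ S ∈ powersetCard k univ, g S)
        = n * (((n - k : ℕ) : ℝ) * ∑ S ∈ powersetCard k univ, g S) := by ring
      _ ≤ n * (k * ∑ T ∈ powersetCard (k + 1) univ, g T) := by gcongr
      _ = k * (n * ∑ T ∈ powersetCard (k + 1) univ, g T) := by ring
      _ ≤ k * ((k + 1) * n.choose (k + 1) * g univ) := by gcongr
      _ = ((n - k : ℕ) : ℝ) * (k * n.choose k * g univ) := by
        linear_combination (k * g univ) * hchoose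

end Han

theorem averaged_han_inequality_general
    {Ω : Type*} [Fintype Ω] (p : Ω → ℝ)
    (hp0 : ∀ ω, 0 ≤ p ω) (hp1 : ∑ ω : Ω, p ω = 1)
    (L : ℕ) (hL : 0 < L)
    (α : Fin L → Type*) [∀ i, DecidableEq (α i)]
    (A : ∀ i : Fin L, Ω → α i)
    {β : Type*} [DecidableEq β] (V : Ω → β)
    (hindep : ∀ x : ∀ i, α i,
      pr p (fun ω => fun i => A i ω) x = ∏ i : Fin L, pr p (A i) (x i))
    (l : ℕ) (hl2 : l ≤ L) :
    (1 / (L.choose l : ℝ)) *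
        ∑ S ∈ Finset.powersetCard l (Finset.univ : Finset (Fin L)),
          mi p (fun ω => fun i : Fin L => if i ∈ S then some (A i ω) else none) V
      ≤ ((l : ℝ) / (L : ℝ)) * mi p (fun ω => fun i => A i ω) V := by
  set g : Finset (Fin L) → ℝ := fun S =>
    ∑ i ∈ S, ent p (A i) + ent p V - ent p (fun ω => (subtuple A S ω, V ω))
  have hmi_le : ∀ S, mi p (subtuple A S) V ≤ g S := fun S => by
    simp only [mi, g]
    linarith [ent_subtuple_le_sum hp0 hp1 A S]
  have hg_univ : g univ = mi p (fun ω i => A i ω) V := by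
    simp only [g, mi]
    rw [ent_subtuple_univ_pair, ent_pi_eq_sum_of_indep hp0 A hindep]
  have hg_empty : g ∅ = 0 := by simp [g, ent_subtuple_empty_pair]
  have hg_super : ∀ S T, g S + g T ≤ g (S ∪ T) + g (S ∩ T) := fun S T => by
    linarith [ent_subtuple_pair_union_add_inter_le hp0 hp1 A V S T,
      sum_union_inter (s₁ := S) (s₂ := T) (f := fun i => ent p (A i))]
  have han := card_mul_sum_powersetCard_le_of_supermodular hg_empty hg_super
    (hl2.trans_eq (Fintype.card_fin L).symm)
  rw [Fintype.card_fin, hg_univ] at han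
  have hC : (0 : ℝ) < L.choose l := by exact_mod_cast Nat.choose_pos hl2
  have hLpos : (0 : ℝ) < L := by exact_mod_cast hL
  calc _ ≤ 1 / (L.choose l : ℝ) * ∑ S ∈ powersetCard l univ, g S := by
        gcongr with S; exact hmi_le S
    _ ≤ _ := by
        rw [one_div_mul_eq_div, div_mul_eq_mul_div, div_le_div_iff₀ hC hLpos]
        linarith

/-- **Lemma 2 (averaged Han-type inequality).**
If `A_1,…,A_L` are mutually independent and `V` is arbitrary, then for every
`l ∈ {1,…,L}`:
`(1/C(L,l))·∑_{|S|=l} I(A_S;V) ≤ (l/L)·I(A_1,…,A_L;V)`.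
(The subtuple `A_S` is encoded as the function `i ↦ if i ∈ S then some (A_i) else none`.) -/
theorem averaged_han_inequality
    {Ω : Type*} [Fintype Ω] (p : Ω → ℝ)
    (hp0 : ∀ ω, 0 ≤ p ω) (hp1 : ∑ ω : Ω, p ω = 1)
    (L : ℕ) (hL : 0 < L)
    (α : Fin L → Type*) [∀ i, Fintype (α i)] [∀ i, DecidableEq (α i)]
    (A : ∀ i : Fin L, Ω → α i)
    {β : Type*} [DecidableEq β] (V : Ω → β)
    (hindep : ∀ x : ∀ i, α i,
      pr p (fun ω => fun i => A i ω) x = ∏ i : Fin L, pr p (A i) (x i))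
    (l : ℕ) (hl1 : 1 ≤ l) (hl2 : l ≤ L) :
    (1 / (L.choose l : ℝ)) *
        ∑ S ∈ Finset.powersetCard l (Finset.univ : Finset (Fin L)),
          mi p (fun ω => fun i : Fin L => if i ∈ S then some (A i ω) else none) V
      ≤ ((l : ℝ) / (L : ℝ)) * mi p (fun ω => fun i => A i ω) V :=
  averaged_han_inequality_general p hp0 hp1 L hL α A V hindep l hl2
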